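/- arXiv:2205.08842 — 2 statements merged into one kernel-verified Lean document; each statement's English description precedes it below -/
import Mathlib

section
/- Define the operator entanglement of a d²×d² unitary U as E(U) = 1 − tr[(U^R U^{R†})²]/d⁴. Then E(U) ≤ 1 − 1/d², with equality if and only if U^R is unitary (i.e. U is dual-unitary). -/
open Matrix

/-- Realignment: `(U^R)[(β,α),(j,i)] = U[(i,α),(j,β)]`. -/
def realign (d : ℕ) (U : Matrix (Fin d × Fin d) (Fin d × Fin d) ℂ) :
    Matrix (Fin d × Fin d) (Fin d × Fin d) ℂ :=
  Matrix.of fun p q => U (q.2, p.2) (q.1, p.1)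

/-- Operator entanglement `E(U) = 1 - tr[(U^R U^{R†})²]/d⁴`. -/
noncomputable def opEnt (d : ℕ) (U : Matrix (Fin d × Fin d) (Fin d × Fin d) ℂ) : ℝ :=
  1 - (Matrix.trace ((realign d U * (realign d U)ᴴ) ^ 2)).re / (d : ℝ) ^ 4

/-!
Let `A = U^R U^R†`. Realignment only permutes the entries of `U`, so
`tr A = ‖U^R‖_F² = ‖U‖_F² = d²`, the dimension of the space. For a Hermitian `A` of trace
equal to the dimension, `tr A² = d² + ‖A - 1‖_F²`; hence `tr A² ≥ d²`, with equality
exactly when `A = 1`, i.e. when `U^R` is unitary.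
-/

open scoped ComplexOrder

namespace Matrix

theorem trace_mul_conjTranspose_eq_sum {n R : Type*} [Fintype n] [NonUnitalSemiring R] [Star R]
    (A : Matrix n n R) : (A * Aᴴ).trace = ∑ i, ∑ j, A i j * star (A i j) := by
  simp only [trace, diag, mul_apply, conjTranspose_apply]

variable {n : Type*} [Fintype n] [DecidableEq n]

theorem IsHermitian.trace_sq_eq_card_add {R : Type*} [CommRing R] [StarRing R]
    {A : Matrix n n R} (hA : A.IsHermitian) (htr : A.trace = Fintype.card n) :
    (A ^ 2).trace = Fintype.card n + ((A - 1) * (A - 1)ᴴ).trace := by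
  have h1 : (A - 1)ᴴ = A - 1 := (hA.sub isHermitian_one).eq
  rw [h1, sq, sub_mul, mul_sub, mul_sub, mul_one, one_mul, one_mul]
  simp only [trace_sub, trace_one, htr]
  ring

variable {A : Matrix n n ℂ}

theorem IsHermitian.card_le_re_trace_sq (hA : A.IsHermitian)
    (htr : A.trace = Fintype.card n) : (Fintype.card n : ℝ) ≤ (A ^ 2).trace.re := by
  have h := (posSemidef_self_mul_conjTranspose (A - 1)).trace_nonneg
  rw [hA.trace_sq_eq_card_add htr, Complex.add_re, Complex.natCast_re]
  linarith [(Complex.nonneg_iff.mp h).1]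

theorem IsHermitian.re_trace_sq_eq_card_iff (hA : A.IsHermitian)
    (htr : A.trace = Fintype.card n) : (A ^ 2).trace.re = Fintype.card n ↔ A = 1 := by
  obtain ⟨-, him⟩ :=
    Complex.nonneg_iff.mp (posSemidef_self_mul_conjTranspose (A - 1)).trace_nonneg
  rw [hA.trace_sq_eq_card_add htr, Complex.add_re, Complex.natCast_re, add_eq_left,
    ← sub_eq_zero (a := A), ← trace_mul_conjTranspose_self_eq_zero_iff, Complex.ext_iff, ← him]
  simp

end Matrix

theorem trace_realign_mul_conjTranspose (d : ℕ) (U : Matrix (Fin d × Fin d) (Fin d × Fin d) ℂ) :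
    (realign d U * (realign d U)ᴴ).trace = (U * Uᴴ).trace := by
  simp only [trace_mul_conjTranspose_eq_sum, ← Fintype.sum_prod_type']
  exact Fintype.sum_bijective (fun x => ((x.2.2, x.1.2), (x.2.1, x.1.1)))
    (Function.Involutive.bijective fun _ => rfl) _ _ fun _ => rfl

theorem opEnt_le_and_eq_iff_dual (d : ℕ) (hd : 0 < d)
    (U : Matrix (Fin d × Fin d) (Fin d × Fin d) ℂ)
    (hU : U ∈ Matrix.unitaryGroup (Fin d × Fin d) ℂ) :
    opEnt d U ≤ 1 - 1 / (d : ℝ) ^ 2 ∧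
      (opEnt d U = 1 - 1 / (d : ℝ) ^ 2 ↔
        realign d U ∈ Matrix.unitaryGroup (Fin d × Fin d) ℂ) := by
  set A := realign d U * (realign d U)ᴴ
  have hA : A.IsHermitian := isHermitian_mul_conjTranspose_self _
  have htr : A.trace = Fintype.card (Fin d × Fin d) := by
    rw [trace_realign_mul_conjTranspose, ← star_eq_conjTranspose, mem_unitaryGroup_iff.mp hU,
      trace_one]
  have hcard : (Fintype.card (Fin d × Fin d) : ℝ) = (d : ℝ) ^ 2 := by
    rw [Fintype.card_prod, Fintype.card_fin]; push_cast; ring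
  have hd4 : (0 : ℝ) < (d : ℝ) ^ 4 := by positivity
  have hinv : 1 / (d : ℝ) ^ 2 = (d : ℝ) ^ 2 / (d : ℝ) ^ 4 := by field_simp
  rw [opEnt, hinv, sub_le_sub_iff_left, sub_right_inj, div_le_div_iff_of_pos_right hd4,
    div_left_inj' hd4.ne', ← hcard, hA.re_trace_sq_eq_card_iff htr, mem_unitaryGroup_iff]
  exact ⟨hA.card_le_re_trace_sq htr, Iff.rfl⟩
end

section
/- Quantum design criterion for dual-unitarity (Theorem 3): Suppose for each i,j ∈ Fin d we are given unit vectors α_{ij}, β_{ij} ∈ ℂ^d such that for every fixed i the family {α_{ij}}_j is an orthonormal basis, and for every fixed j the family {β_{ij}}_i is an orthonormal basis. If the vectors {α_{ij}⊗β_{ij}}_{i,j} form an orthonormal basis of ℂ^d⊗ℂ^d, then the operator U = Σ_{i,j} |α_{ij}⊗β_{ij}⟩⟨ij| is unitary and its realignment U^R is also unitary, i.e. U is dual-unitary. -/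
open scoped BigOperators

theorem quantum_design_dual_unitary (d : ℕ)
    (α β : Fin d → Fin d → (Fin d → ℂ))
    (U : Matrix (Fin d × Fin d) (Fin d × Fin d) ℂ)
    (hUdef : ∀ a b i j, U (a, b) (i, j) = α i j a * β i j b)
    -- each row of 𝒦 is an orthonormal basis: orthonormality and completeness
    (hαon : ∀ i j j', (∑ a, starRingEnd ℂ (α i j a) * α i j' a) = if j = j' then 1 else 0)
    (hαcomp : ∀ i a a', (∑ j, α i j a * starRingEnd ℂ (α i j a')) = if a = a' then 1 else 0)
    -- each column of ℒ is an orthonormal basis: orthonormality and completeness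
    (hβon : ∀ i i' j, (∑ b, starRingEnd ℂ (β i j b) * β i' j b) = if i = i' then 1 else 0)
    (hβcomp : ∀ j b b', (∑ i, β i j b * starRingEnd ℂ (β i j b')) = if b = b' then 1 else 0)
    -- the product vectors form an orthonormal basis of ℂ^d ⊗ ℂ^d
    (hprod : ∀ i j i' j',
      (∑ a, ∑ b, starRingEnd ℂ (α i' j' a * β i' j' b) * (α i j a * β i j b)) =
        if i = i' ∧ j = j' then 1 else 0) :
    U ∈ Matrix.unitaryGroup (Fin d × Fin d) ℂ ∧
      realign d U ∈ Matrix.unitaryGroup (Fin d × Fin d) ℂ := by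
  constructor
  · rw [Matrix.mem_unitaryGroup_iff']
    ext ⟨i, j⟩ ⟨i', j'⟩
    simp only [Matrix.mul_apply, Matrix.star_apply, Matrix.one_apply, Fintype.sum_prod_type,
      hUdef, ← starRingEnd_apply]
    have h := hprod i' j' i j
    rw [h]
    by_cases hii : i = i' <;> by_cases hjj : j = j' <;>
      simp [hii, hjj, Prod.ext_iff, eq_comm]
  · rw [Matrix.mem_unitaryGroup_iff]
    ext ⟨b, a⟩ ⟨b', a'⟩
    simp only [Matrix.mul_apply, Matrix.star_apply, Matrix.one_apply, Fintype.sum_prod_type,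
      realign, Matrix.of_apply, hUdef, ← starRingEnd_apply, map_mul]
    have key : ∀ x : Fin d,
        (∑ y, α x b y * β x b a * (starRingEnd ℂ (α x b' y) * starRingEnd ℂ (β x b' a')))
          = (if b' = b then 1 else 0) * (β x b a * starRingEnd ℂ (β x b' a')) := by
      intro x
      rw [← hαon x b' b, Finset.sum_mul]
      exact Finset.sum_congr rfl fun y _ => by ring
    calc (∑ x, ∑ y, α x b y * β x b a * (starRingEnd ℂ (α x b' y) * starRingEnd ℂ (β x b' a')))
        = ∑ x, (if b' = b then 1 else 0) * (β x b a * starRingEnd ℂ (β x b' a')) := by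
          exact Finset.sum_congr rfl fun x _ => key x
      _ = if (b, a) = (b', a') then 1 else 0 := by
          by_cases hbb : b = b'
          · subst hbb
            simpa using hβcomp b a a'
          · simp [Ne.symm hbb, hbb, Prod.ext_iff]
end
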